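/- For every A ⊆ [n], writing [∅,A) = {B ⊆ [n] : B <_b A} and [∅,A] = [∅,A) ∪ {A}, we have w([∅,A]) = w([∅,A)) + 1 if and only if A is a special point. -/

import Mathlib

open scoped Classical

/-- The width of a finite family of finite sets: the maximum size of an
antichain (under inclusion) contained in the family. -/
noncomputable def width (F : Finset (Finset ℕ)) : ℕ :=
  (F.powerset.filter (fun A => ∀ x ∈ A, ∀ y ∈ A, x ≠ y → ¬ x ⊆ y)).sup Finset.card

/-- Binary order: `A <_b B` iff the largest element of `A Δ B` lies in `B`. -/
def binLT (A B : Finset ℕ) : Prop :=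
  ∃ k, k ∈ B ∧ k ∉ A ∧ ∀ j, k < j → (j ∈ A ↔ j ∈ B)

/-- A subset `A ⊆ [n]` is a special point if `2·|A ∩ [t]| ≤ t` for all `t ∈ [n]`. -/
def SpecialPoint (n : ℕ) (A : Finset ℕ) : Prop :=
  ∀ t ∈ Finset.Icc 1 n, 2 * (A ∩ Finset.Icc 1 t).card ≤ t

/-- The strict initial segment `[∅, A)` of the binary order on `B(n)`. -/
noncomputable def binSegLT (n : ℕ) (A : Finset ℕ) : Finset (Finset ℕ) :=
  (Finset.Icc 1 n).powerset.filter (fun B => binLT B A)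

/-!
Read `B ⊆ [n]` as a 0/1 word and let `walk B t = t - 2·|B ∩ [t]|`, so that the special points
are the sets whose walk stays nonnegative. The Greene–Kleitman unpaired ones of `B` are the
strict record minima of its walk (`unmatched`); removing them gives the bottom `chainMin B` of
the Greene–Kleitman chain of `B`, which is special, and two sets with the same `chainMin` are
comparable. Hence a down-closed family in `B(n)`, such as `[∅, A)` or `[∅, A]`, has width at
most its number of special points.

For the reverse inequality split `[∅, A)` into blocks according to the largest element `a` of
the symmetric difference with `A`, and take in each block the sets with a prescribed number
`levelRank a` of elements below `a`. The ranks grow fast enough from block to block for the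
union of these levels to be an antichain, and each level is at least as large as the number of
special points of its block, because every Greene–Kleitman chain starting at one of them
reaches it. When `A` is special, `levelRank a` also exceeds `|A ∩ [a - 1]|`, so `A` can be
added to the antichain. Thus `w([∅, A))` is the number of special points below `A`, and
`w([∅, A])` exceeds it exactly when `A` is special.
-/

open Finset

lemma card_inter_Ioc_add_card_inter_Ioc (X : Finset ℕ) {a b c : ℕ} (hab : a ≤ b) (hbc : b ≤ c) :
    #(X ∩ Ioc a b) + #(X ∩ Ioc b c) = #(X ∩ Ioc a c) := by
  rw [← card_union_of_disjoint, ← inter_union_distrib_left, Ioc_union_Ioc_eq_Ioc hab hbc]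
  exact (Ioc_disjoint_Ioc_of_le le_rfl).mono inter_subset_right inter_subset_right

lemma card_inter_Icc_add_card_inter_Ioc (X : Finset ℕ) {a b : ℕ} (h : a ≤ b) :
    #(X ∩ Icc 1 a) + #(X ∩ Ioc a b) = #(X ∩ Icc 1 b) :=
  card_inter_Ioc_add_card_inter_Ioc X (Nat.zero_le a) h

lemma card_inter_Icc_succ (X : Finset ℕ) (t : ℕ) :
    #(X ∩ Icc 1 (t + 1)) = #(X ∩ Icc 1 t) + if t + 1 ∈ X then 1 else 0 := by
  rw [← card_inter_Icc_add_card_inter_Ioc X t.le_succ, Nat.Ioc_succ_singleton]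
  split_ifs with h <;> simp [h]

lemma eq_of_card_inter_Icc_eq {X Y : Finset ℕ} {m : ℕ} (hX : X ⊆ Icc 1 m) (hY : Y ⊆ Icc 1 m)
    (h : ∀ t ≤ m, #(X ∩ Icc 1 t) = #(Y ∩ Icc 1 t)) : X = Y := by
  ext i
  by_cases hi : i ∈ Icc 1 m
  · obtain ⟨t, rfl⟩ : ∃ t, i = t + 1 := ⟨i - 1, by grind⟩
    have hc := h (t + 1) (mem_Icc.1 hi).2
    rw [card_inter_Icc_succ, card_inter_Icc_succ, h t (by grind)] at hc
    split_ifs at hc <;> simp_all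
  · exact iff_of_false (fun h => hi (hX h)) (fun h => hi (hY h))

lemma exists_card_inter_Icc_eq (X : Finset ℕ) {k m : ℕ} (hk : k ≤ #(X ∩ Icc 1 m)) :
    ∃ s ≤ m, #(X ∩ Icc 1 s) = k := by
  induction m with
  | zero => exact ⟨0, le_rfl, by simp at hk; simp [hk]⟩
  | succ m ih =>
    by_cases hkm : k ≤ #(X ∩ Icc 1 m)
    · obtain ⟨s, hs, hsk⟩ := ih hkm
      exact ⟨s, hs.trans m.le_succ, hsk⟩
    · rw [card_inter_Icc_succ] at hk
      exact ⟨m + 1, le_rfl, by rw [card_inter_Icc_succ]; split_ifs at hk ⊢ <;> omega⟩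

def walk (B : Finset ℕ) (t : ℕ) : ℤ := t - 2 * #(B ∩ Icc 1 t)

lemma walk_zero (B : Finset ℕ) : walk B 0 = 0 := by simp [walk]

lemma walk_succ (B : Finset ℕ) (t : ℕ) :
    walk B (t + 1) = walk B t + if t + 1 ∈ B then -1 else 1 := by
  simp only [walk, card_inter_Icc_succ]
  split_ifs <;> push_cast <;> ring

lemma walk_succ_of_mem {B : Finset ℕ} {t : ℕ} (h : t + 1 ∈ B) : walk B (t + 1) = walk B t - 1 := by
  rw [walk_succ, if_pos h, sub_eq_add_neg]

lemma walk_succ_of_notMem {B : Finset ℕ} {t : ℕ} (h : t + 1 ∉ B) :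
    walk B (t + 1) = walk B t + 1 := by
  rw [walk_succ, if_neg h]

lemma specialPoint_iff_walk_nonneg {n : ℕ} {A : Finset ℕ} :
    SpecialPoint n A ↔ ∀ t ≤ n, 0 ≤ walk A t := by
  refine ⟨fun h t ht => ?_, fun h t ht => ?_⟩
  · rcases Nat.eq_zero_or_pos t with rfl | ht0
    · rw [walk_zero]
    · have := h t (mem_Icc.2 ⟨ht0, ht⟩)
      simp only [walk]
      omega
  · have := h t (mem_Icc.1 ht).2
    simp only [walk] at this
    omega

lemma SpecialPoint.two_mul_card_le {n : ℕ} {A : Finset ℕ} (h : SpecialPoint n A) {t : ℕ}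
    (ht : t ≤ n) : 2 * #(A ∩ Icc 1 t) ≤ t := by
  have := specialPoint_iff_walk_nonneg.1 h t ht
  simp only [walk] at this
  omega

def unmatched (B : Finset ℕ) : Finset ℕ := B.filter fun i => ∀ s < i, walk B i < walk B s

def chainMin (B : Finset ℕ) : Finset ℕ := B \ unmatched B

theorem isLeast_walk_unmatched (B : Finset ℕ) (t : ℕ) :
    IsLeast (walk B '' Set.Iic t) (-#(unmatched B ∩ Icc 1 t)) := by
  induction t with
  | zero =>
    refine ⟨⟨0, Set.self_mem_Iic, by simp [walk_zero]⟩, ?_⟩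
    rintro _ ⟨s, hs, rfl⟩
    rw [Set.mem_Iic, Nat.le_zero] at hs
    simp [hs, walk_zero]
  | succ t ih =>
    obtain ⟨⟨s₀, hs₀, hs₀eq⟩, hlow⟩ := ih
    have hle : ∀ s ≤ t, -(#(unmatched B ∩ Icc 1 t) : ℤ) ≤ walk B s :=
      fun s hs => hlow ⟨s, hs, rfl⟩
    have hwt := hle t le_rfl
    rw [card_inter_Icc_succ]
    by_cases hu : t + 1 ∈ unmatched B
    · have hrec := (mem_filter.1 hu).2 s₀ (Nat.lt_succ_of_le hs₀)
      have hdown := walk_succ_of_mem (mem_filter.1 hu).1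
      rw [if_pos hu]
      push_cast
      refine ⟨⟨t + 1, Set.self_mem_Iic, by omega⟩, ?_⟩
      rintro _ ⟨s, hs, rfl⟩
      rcases Nat.le_add_one_iff.1 hs with hs | rfl
      · linarith [hle s hs]
      · omega
    · rw [if_neg hu, add_zero]
      refine ⟨⟨s₀, Set.mem_Iic.2 (Nat.le_succ_of_le hs₀), hs₀eq⟩, ?_⟩
      rintro _ ⟨s, hs, rfl⟩
      rcases Nat.le_add_one_iff.1 hs with hs | rfl
      · exact hle s hs
      by_cases hB : t + 1 ∈ B
      · obtain ⟨s, hs, hws⟩ : ∃ s < t + 1, walk B s ≤ walk B (t + 1) := by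
          simpa [unmatched, hB] using hu
        exact (hle s (Nat.le_of_lt_succ hs)).trans hws
      · rw [walk_succ_of_notMem hB]
        omega

lemma walk_of_mem_unmatched {B : Finset ℕ} {r : ℕ} (hr : r ∈ unmatched B) :
    walk B r = -#(unmatched B ∩ Icc 1 r) := by
  obtain ⟨⟨s, hs, hseq⟩, hlow⟩ := isLeast_walk_unmatched B r
  rcases (Set.mem_Iic.1 hs).lt_or_eq with hlt | rfl
  · have := (mem_filter.1 hr).2 s hlt
    have := hlow ⟨r, Set.self_mem_Iic, rfl⟩
    omega
  · exact hseq

lemma card_unmatched_inter_Icc_mono (B : Finset ℕ) {s t : ℕ} (h : s ≤ t) :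
    #(unmatched B ∩ Icc 1 s) ≤ #(unmatched B ∩ Icc 1 t) :=
  card_le_card (inter_subset_inter_left (Icc_subset_Icc_right h))

lemma chainMin_union_unmatched (B : Finset ℕ) : chainMin B ∪ unmatched B = B :=
  sdiff_union_of_subset (filter_subset _ _)

lemma walk_chainMin (B : Finset ℕ) (t : ℕ) :
    walk (chainMin B) t = walk B t + 2 * #(unmatched B ∩ Icc 1 t) := by
  have hsub : unmatched B ∩ Icc 1 t ⊆ B ∩ Icc 1 t := inter_subset_inter_right (filter_subset _ _)
  have hset : chainMin B ∩ Icc 1 t = (B ∩ Icc 1 t) \ (unmatched B ∩ Icc 1 t) :=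
    inf_sdiff_distrib_right _ _ _
  rw [walk, walk, hset, card_sdiff_of_subset hsub, Nat.cast_sub (card_le_card hsub)]
  ring

lemma walk_chainMin_nonneg (B : Finset ℕ) (t : ℕ) : 0 ≤ walk (chainMin B) t := by
  have := (isLeast_walk_unmatched B t).2 ⟨t, Set.self_mem_Iic, rfl⟩
  rw [walk_chainMin]
  omega

/-- The Greene–Kleitman unpaired zeros of `g` inside `[1, m]`. -/
def freeZeros (g : Finset ℕ) (m : ℕ) : Finset ℕ :=
  (Icc 1 m).filter fun j => j ∉ g ∧ ∀ t ∈ Icc j m, walk g j ≤ walk g t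

section FreeZeros

variable {g : Finset ℕ} {m : ℕ}

lemma freeZeros_subset : freeZeros g m ⊆ Icc 1 m := filter_subset _ _

theorem isLeast_walk_freeZeros (hg : ∀ t ≤ m, 0 ≤ walk g t) {s : ℕ} (hs : s ≤ m) :
    IsLeast (walk g '' Set.Icc s m) #(freeZeros g m ∩ Icc 1 s) := by
  induction s with
  | zero =>
    refine ⟨⟨0, ⟨le_rfl, hs⟩, by simp [walk_zero]⟩, ?_⟩
    rintro _ ⟨t, ht, rfl⟩
    simpa using hg t ht.2
  | succ s ih =>
    obtain ⟨⟨t₀, ht₀, ht₀eq⟩, hlow⟩ := ih (by omega)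
    have hle : ∀ t ∈ Set.Icc s m, (#(freeZeros g m ∩ Icc 1 s) : ℤ) ≤ walk g t :=
      fun t ht => hlow ⟨t, ht, rfl⟩
    have hstep := walk_succ g s
    have hws := hle s ⟨le_rfl, by omega⟩
    have hws1 := hle (s + 1) ⟨by omega, hs⟩
    rw [card_inter_Icc_succ]
    by_cases hz : s + 1 ∈ freeZeros g m
    · obtain ⟨-, hzg, hzmin⟩ := mem_filter.1 hz
      rw [if_pos hz, if_neg hzg] at *
      have ht₀s : t₀ = s := by
        by_contra hne
        have := hzmin t₀ (mem_Icc.2 ⟨by grind, ht₀.2⟩)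
        omega
      subst ht₀s
      push_cast
      refine ⟨⟨t₀ + 1, ⟨le_rfl, hs⟩, by omega⟩, ?_⟩
      rintro _ ⟨t, ht, rfl⟩
      have := hzmin t (mem_Icc.2 ht)
      omega
    · rw [if_neg hz, add_zero]
      refine ⟨?_, fun _ ⟨t, ht, hteq⟩ => hteq ▸ hle t ⟨by grind, ht.2⟩⟩
      by_cases ht₀s : t₀ = s
      · subst ht₀s
        have hg1 : t₀ + 1 ∉ g := fun h => by rw [if_pos h] at hstep; omega
        obtain ⟨t, ht₀t, htm, hlt⟩ : ∃ t, t₀ < t ∧ t ≤ m ∧ walk g t < walk g (t₀ + 1) := by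
          simpa [freeZeros, hg1, hs] using hz
        have := hle t ⟨ht₀t.le, htm⟩
        rw [if_neg hg1] at hstep
        exact ⟨t, ⟨ht₀t, htm⟩, by omega⟩
      · exact ⟨t₀, ⟨by grind, ht₀.2⟩, ht₀eq⟩

variable (hg : ∀ t ≤ m, 0 ≤ walk g t)
include hg

lemma card_freeZeros_inter_le_walk {s : ℕ} (hs : s ≤ m) :
    #(freeZeros g m ∩ Icc 1 s) ≤ walk g s :=
  (isLeast_walk_freeZeros hg hs).2 (Set.mem_image_of_mem _ ⟨le_rfl, hs⟩)

lemma walk_of_mem_freeZeros {j : ℕ} (hj : j ∈ freeZeros g m) :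
    walk g j = #(freeZeros g m ∩ Icc 1 j) := by
  obtain ⟨hjm, -, hmin⟩ := mem_filter.1 hj
  have hleast : IsLeast (walk g '' Set.Icc j m) (walk g j) := by
    refine ⟨Set.mem_image_of_mem _ ⟨le_rfl, (mem_Icc.1 hjm).2⟩, ?_⟩
    rintro _ ⟨t, ht, rfl⟩
    exact hmin t (mem_Icc.2 ht)
  exact hleast.unique (isLeast_walk_freeZeros hg (mem_Icc.1 hjm).2)

lemma card_freeZeros (hgm : g ⊆ Icc 1 m) : (#(freeZeros g m) : ℤ) = m - 2 * #g := by
  have h := isLeast_walk_freeZeros hg le_rfl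
  rw [Set.Icc_self, Set.image_singleton, inter_eq_left.2 freeZeros_subset] at h
  rw [Set.mem_singleton_iff.1 h.1, walk, inter_eq_left.2 hgm]

end FreeZeros

section Fibres

variable {B : Finset ℕ} {m : ℕ}

lemma unmatched_subset_freeZeros (hB : B ⊆ Icc 1 m) : unmatched B ⊆ freeZeros (chainMin B) m := by
  intro r hr
  refine mem_filter.2 ⟨hB (filter_subset _ _ hr), fun h => (mem_sdiff.1 h).2 hr, fun t ht => ?_⟩
  have hlow := (isLeast_walk_unmatched B t).2 (Set.mem_image_of_mem _ Set.self_mem_Iic)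
  have hmono := card_unmatched_inter_Icc_mono B (mem_Icc.1 ht).1
  rw [walk_chainMin, walk_chainMin, walk_of_mem_unmatched hr]
  omega

lemma exists_walk_eq_neg_card_unmatched_of_le {j r : ℕ} (hjr : j ≤ r)
    (hr : walk B r ≤ -#(unmatched B ∩ Icc 1 j)) :
    ∃ t ∈ Icc j r, walk B t = -#(unmatched B ∩ Icc 1 j) ∧
      #(unmatched B ∩ Icc 1 t) = #(unmatched B ∩ Icc 1 j) := by
  set w : ℤ := (#(unmatched B ∩ Icc 1 j) : ℤ)
  have hlow : ∀ s ≤ j, -w ≤ walk B s :=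
    fun s hs => (isLeast_walk_unmatched B j).2 (Set.mem_image_of_mem _ hs)
  have hex : ∃ t, j ≤ t ∧ walk B t ≤ -w := ⟨r, hjr, hr⟩
  obtain ⟨t₀, ⟨hjt₀, hwt₀⟩, hmin⟩ :
      ∃ t₀, (j ≤ t₀ ∧ walk B t₀ ≤ -w) ∧ ∀ t < t₀, ¬(j ≤ t ∧ walk B t ≤ -w) :=
    ⟨Nat.find hex, Nat.find_spec hex, fun _ => Nat.find_min hex⟩
  have hge : ∀ s < t₀, -w ≤ walk B s := fun s hs => by
    by_cases hsj : s ≤ j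
    · exact hlow s hsj
    · exact (lt_of_not_ge fun h => hmin s hs ⟨by omega, h⟩).le
  have hwt₀eq : walk B t₀ = -w := by
    rcases hjt₀.eq_or_lt with rfl | hlt
    · exact le_antisymm hwt₀ (hlow _ le_rfl)
    obtain ⟨u, rfl⟩ : ∃ u, t₀ = u + 1 := ⟨t₀ - 1, by omega⟩
    have hu : -w < walk B u := lt_of_not_ge fun h => hmin u u.lt_succ_self ⟨by omega, h⟩
    have := walk_succ B u
    split_ifs at this <;> omega
  refine ⟨t₀, mem_Icc.2 ⟨hjt₀, not_lt.1 fun h => hmin r h ⟨hjr, hr⟩⟩, hwt₀eq, ?_⟩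
  refine Nat.cast_injective (R := ℤ) (neg_inj.1 ((isLeast_walk_unmatched B t₀).unique
    ⟨⟨t₀, Set.self_mem_Iic, hwt₀eq⟩, ?_⟩))
  rintro _ ⟨s, hs, rfl⟩
  rcases (Set.mem_Iic.1 hs).lt_or_eq with hst | rfl
  · exact hge s hst
  · exact hwt₀eq.ge

/-- If `j` were matched, the walk of `B` would come back to its running minimum at time `j`
before `r` without a new unmatched element, and there the walk of `chainMin B` would drop below
its value at the free zero `j`. -/
lemma mem_unmatched_of_mem_freeZeros_of_lt (hB : B ⊆ Icc 1 m) {j r : ℕ}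
    (hj : j ∈ freeZeros (chainMin B) m) (hr : r ∈ unmatched B) (hjr : j < r) :
    j ∈ unmatched B := by
  by_contra hju
  obtain ⟨hjm, hjg, hjmin⟩ := mem_filter.1 hj
  obtain ⟨i, rfl⟩ : ∃ i, j = i + 1 := ⟨j - 1, by grind⟩
  have hjB : i + 1 ∉ B := fun h => hjg (mem_sdiff.2 ⟨h, hju⟩)
  have hwj : 1 - #(unmatched B ∩ Icc 1 (i + 1)) ≤ walk B (i + 1) := by
    rw [walk_succ_of_notMem hjB]
    have := (isLeast_walk_unmatched B (i + 1)).2 (Set.mem_image_of_mem _ (Set.mem_Iic.2 i.le_succ))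
    linarith
  have hwr : walk B r ≤ -#(unmatched B ∩ Icc 1 (i + 1)) - 1 := by
    have : #(unmatched B ∩ Icc 1 (i + 1)) < #(unmatched B ∩ Icc 1 r) :=
      card_lt_card <| (ssubset_iff_of_subset <|
        inter_subset_inter_left (Icc_subset_Icc_right hjr.le)).2
          ⟨r, mem_inter.2 ⟨hr, mem_Icc.2 ⟨by omega, le_rfl⟩⟩, by simp; omega⟩
    rw [walk_of_mem_unmatched hr]
    omega
  obtain ⟨t, ht, hwt, hct⟩ := exists_walk_eq_neg_card_unmatched_of_le hjr.le (by linarith)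
  have := hjmin t (mem_Icc.2 ⟨(mem_Icc.1 ht).1,
    (mem_Icc.1 ht).2.trans (mem_Icc.1 (hB (filter_subset _ _ hr))).2⟩)
  rw [walk_chainMin, walk_chainMin, hct] at this
  omega

theorem subset_or_subset_of_chainMin_eq {B₁ B₂ : Finset ℕ} (h₁ : B₁ ⊆ Icc 1 m)
    (h₂ : B₂ ⊆ Icc 1 m) (h : chainMin B₁ = chainMin B₂) : B₁ ⊆ B₂ ∨ B₂ ⊆ B₁ := by
  suffices unmatched B₁ ⊆ unmatched B₂ ∨ unmatched B₂ ⊆ unmatched B₁ by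
    rw [← chainMin_union_unmatched B₁, ← chainMin_union_unmatched B₂, h]
    exact this.imp (union_subset_union le_rfl) (union_subset_union le_rfl)
  by_contra! hne
  obtain ⟨⟨x, hx₁, hx₂⟩, ⟨y, hy₂, hy₁⟩⟩ := And.intro (not_subset.1 hne.1) (not_subset.1 hne.2)
  rcases lt_trichotomy x y with hxy | rfl | hxy
  · have hx := unmatched_subset_freeZeros h₁ hx₁
    rw [h] at hx
    exact hx₂ (mem_unmatched_of_mem_freeZeros_of_lt h₂ hx hy₂ hxy)
  · exact hx₂ hy₂
  · have hy := unmatched_subset_freeZeros h₂ hy₂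
    rw [← h] at hy
    exact hy₁ (mem_unmatched_of_mem_freeZeros_of_lt h₁ hy hx₁ hxy)

end Fibres

lemma walk_union_of_disjoint {g F : Finset ℕ} (h : Disjoint g F) (t : ℕ) :
    walk (g ∪ F) t = walk g t - 2 * #(F ∩ Icc 1 t) := by
  rw [walk, walk, union_inter_distrib_right,
    card_union_of_disjoint (h.mono inter_subset_left inter_subset_left)]
  push_cast
  ring

/-- The hypotheses say that `-#(X ∩ Icc 1 t)` is the running minimum of the walk of `B`, which
determines the unmatched elements by `isLeast_walk_unmatched`. -/
theorem unmatched_eq_of_walk {B X : Finset ℕ} {m : ℕ} (hB : B ⊆ Icc 1 m) (hX : X ⊆ Icc 1 m)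
    (hge : ∀ t ≤ m, -(#(X ∩ Icc 1 t) : ℤ) ≤ walk B t)
    (heq : ∀ x ∈ X, walk B x = -#(X ∩ Icc 1 x)) : unmatched B = X := by
  have hwit : ∀ t ≤ m, ∃ s ≤ t, walk B s = -#(X ∩ Icc 1 t) := by
    intro t ht
    induction t with
    | zero => exact ⟨0, le_rfl, by simp [walk_zero]⟩
    | succ t ih =>
      by_cases hx : t + 1 ∈ X
      · exact ⟨t + 1, le_rfl, heq _ hx⟩
      · obtain ⟨s, hs, hws⟩ := ih (by omega)
        exact ⟨s, hs.trans t.le_succ, by rw [card_inter_Icc_succ, if_neg hx, add_zero]; exact hws⟩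
  refine eq_of_card_inter_Icc_eq ((filter_subset _ _).trans hB) hX fun t ht => ?_
  have hleast : IsLeast (walk B '' Set.Iic t) (-#(X ∩ Icc 1 t)) := by
    obtain ⟨s, hs, hws⟩ := hwit t ht
    refine ⟨⟨s, hs, hws⟩, ?_⟩
    rintro _ ⟨s, hs, rfl⟩
    have := card_le_card (inter_subset_inter_left (s := X) (Icc_subset_Icc_right (a := 1) hs))
    have := hge s ((Set.mem_Iic.1 hs).trans ht)
    omega
  exact_mod_cast neg_inj.1 ((isLeast_walk_unmatched B t).unique hleast)

section ChainConstruction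

variable {g : Finset ℕ} {m : ℕ}

lemma disjoint_freeZeros : Disjoint g (freeZeros g m) :=
  disjoint_right.2 fun _ hx => (mem_filter.1 hx).2.1

variable (hgm : g ⊆ Icc 1 m) (hg : ∀ t ≤ m, 0 ≤ walk g t)
include hgm hg

lemma chainMin_union_freeZeros_inter (s : ℕ) : chainMin (g ∪ (freeZeros g m ∩ Icc 1 s)) = g := by
  set F := freeZeros g m ∩ Icc 1 s
  have hdisj : Disjoint g F := disjoint_freeZeros.mono_right inter_subset_left
  have hF : F ⊆ Icc 1 m := inter_subset_left.trans freeZeros_subset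
  have hu : unmatched (g ∪ F) = F := by
    refine unmatched_eq_of_walk (union_subset hgm hF) hF (fun t ht => ?_) (fun x hx => ?_)
    · have h₁ := card_freeZeros_inter_le_walk hg ht
      have h₂ : #(F ∩ Icc 1 t) ≤ #(freeZeros g m ∩ Icc 1 t) :=
        card_le_card (inter_subset_inter_right inter_subset_left)
      rw [walk_union_of_disjoint hdisj]
      omega
    · obtain ⟨hxZ, hxs⟩ := mem_inter.1 hx
      have hFx : F ∩ Icc 1 x = freeZeros g m ∩ Icc 1 x := by
        rw [inter_assoc, inter_eq_right.2 (Icc_subset_Icc_right (mem_Icc.1 hxs).2)]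
      rw [walk_union_of_disjoint hdisj, hFx, walk_of_mem_freeZeros hg hxZ]
      ring
  rw [chainMin, hu, union_sdiff_cancel_right hdisj]

theorem exists_card_eq_chainMin_eq {l : ℕ} (hl : #g ≤ l) (hlm : l + #g ≤ m) :
    ∃ E ⊆ Icc 1 m, #E = l ∧ chainMin E = g := by
  have hZ := card_freeZeros hg hgm
  obtain ⟨s, -, hs⟩ := exists_card_inter_Icc_eq (freeZeros g m) (k := l - #g) (m := m)
    (by rw [inter_eq_left.2 freeZeros_subset]; omega)
  refine ⟨g ∪ (freeZeros g m ∩ Icc 1 s),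
    union_subset hgm (inter_subset_left.trans freeZeros_subset), ?_,
    chainMin_union_freeZeros_inter hgm hg s⟩
  rw [card_union_of_disjoint (disjoint_freeZeros.mono_right inter_subset_left), hs]
  omega

end ChainConstruction

lemma binLT_irrefl (B : Finset ℕ) : ¬binLT B B := fun ⟨_, h₁, h₂, _⟩ => h₂ h₁

lemma binLT_of_ssubset {B C : Finset ℕ} (h : C ⊂ B) : binLT C B := by
  have hne : (B \ C).Nonempty := sdiff_nonempty.2 (not_subset_of_ssubset h)
  obtain ⟨hkB, hkC⟩ := mem_sdiff.1 ((B \ C).max'_mem hne)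
  refine ⟨_, hkB, hkC, fun j hj => ⟨fun hjC => h.subset hjC, fun hjB => ?_⟩⟩
  by_contra hjC
  exact (B \ C).le_max' j (mem_sdiff.2 ⟨hjB, hjC⟩) |>.not_gt hj

lemma binLT_trans {A B C : Finset ℕ} (h₁ : binLT A B) (h₂ : binLT B C) : binLT A C := by
  obtain ⟨k₁, hk₁B, hk₁A, hk₁⟩ := h₁
  obtain ⟨k₂, hk₂C, hk₂B, hk₂⟩ := h₂
  rcases lt_trichotomy k₁ k₂ with h | rfl | h
  · exact ⟨k₂, hk₂C, fun hA => hk₂B ((hk₁ k₂ h).1 hA),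
      fun j hj => (hk₁ j (h.trans hj)).trans (hk₂ j hj)⟩
  · exact ⟨k₁, hk₂C, hk₁A, fun j hj => (hk₁ j hj).trans (hk₂ j hj)⟩
  · exact ⟨k₁, (hk₂ k₁ h).1 hk₁B, hk₁A, fun j hj => (hk₁ j hj).trans (hk₂ j (h.trans hj))⟩

lemma mem_binSegLT {n : ℕ} {A B : Finset ℕ} : B ∈ binSegLT n A ↔ B ⊆ Icc 1 n ∧ binLT B A := by
  simp [binSegLT]

lemma width_le {F : Finset (Finset ℕ)} {c : ℕ}
    (h : ∀ G ⊆ F, IsAntichain (· ⊆ ·) (G : Set (Finset ℕ)) → #G ≤ c) : width F ≤ c :=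
  Finset.sup_le fun G hG => h G (mem_powerset.1 (mem_filter.1 hG).1) (mem_filter.1 hG).2

lemma card_le_width {F G : Finset (Finset ℕ)} (hGF : G ⊆ F)
    (hG : IsAntichain (· ⊆ ·) (G : Set (Finset ℕ))) : #G ≤ width F :=
  le_sup (f := card) (mem_filter.2 ⟨mem_powerset.2 hGF, hG⟩)

/-- An antichain meets each Greene–Kleitman chain at most once, and in a down-closed family
every chain that is met has its minimum in the family. -/
theorem width_le_card_filter_specialPoint {n : ℕ} {F : Finset (Finset ℕ)}
    (hF : ∀ B ∈ F, B ⊆ Icc 1 n) (hdown : ∀ B ∈ F, ∀ C ⊆ B, C ∈ F) :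
    width F ≤ #(F.filter (SpecialPoint n)) := by
  refine width_le fun G hGF hG => card_le_card_of_injOn chainMin (fun B hB => ?_) ?_
  · exact mem_filter.2 ⟨hdown B (hGF hB) _ sdiff_subset,
      specialPoint_iff_walk_nonneg.2 fun t _ => walk_chainMin_nonneg B t⟩
  · intro B₁ hB₁ B₂ hB₂ h
    by_contra hne
    rcases subset_or_subset_of_chainMin_eq (hF _ (hGF hB₁)) (hF _ (hGF hB₂)) h with h' | h'
    · exact hG hB₁ hB₂ hne h'
    · exact hG hB₂ hB₁ (Ne.symm hne) h'

lemma mem_binSegLT_of_subset {n : ℕ} {A B C : Finset ℕ} (hB : B ∈ binSegLT n A) (hCB : C ⊆ B) :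
    C ∈ binSegLT n A := by
  obtain ⟨hBn, hBA⟩ := mem_binSegLT.1 hB
  refine mem_binSegLT.2 ⟨hCB.trans hBn, ?_⟩
  rcases hCB.eq_or_ssubset with rfl | hlt
  · exact hBA
  · exact binLT_trans (binLT_of_ssubset hlt) hBA

section Blocks

variable (n : ℕ) (A : Finset ℕ)

/-- For `a ∈ A`, the sets `B ⊆ [n]` with `B <_b A` for which `a` is the largest element of
`A Δ B`. -/
noncomputable def binBlock (a : ℕ) : Finset (Finset ℕ) :=
  (Icc 1 n).powerset.filter fun x => a ∉ x ∧ ∀ j, a < j → (j ∈ x ↔ j ∈ A)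

noncomputable def specialBlock (a : ℕ) : Finset (Finset ℕ) :=
  (binBlock n A a).filter (SpecialPoint n)

noncomputable def activeBlocks : Finset ℕ := A.filter fun a => (specialBlock n A a).Nonempty

noncomputable def blockRank (a : ℕ) : ℕ := (specialBlock n A a).sup fun x => #(x ∩ Icc 1 (a - 1))

/-- The rank of the level chosen in the block of `a`: small enough that the levels of later
blocks sit strictly higher (`levelRank_add_card_le`), and large enough that the level meets
every Greene–Kleitman chain through a special point of the block. -/
noncomputable def levelRank (a : ℕ) : ℕ :=
  sInf ((fun b => b - 1 - blockRank n A b - #(A ∩ Ioc a b)) '' {b | b ∈ activeBlocks n A ∧ a ≤ b})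

noncomputable def levelBlock (a : ℕ) : Finset (Finset ℕ) :=
  (binBlock n A a).filter fun x => #(x ∩ Icc 1 (a - 1)) = levelRank n A a

noncomputable def levelAntichain : Finset (Finset ℕ) := (activeBlocks n A).biUnion (levelBlock n A)

variable {n A}

lemma mem_binBlock {a : ℕ} {x : Finset ℕ} :
    x ∈ binBlock n A a ↔ x ⊆ Icc 1 n ∧ a ∉ x ∧ ∀ j, a < j → (j ∈ x ↔ j ∈ A) := by
  simp [binBlock]

lemma mem_binSegLT_iff_exists_binBlock {x : Finset ℕ} :
    x ∈ binSegLT n A ↔ ∃ a ∈ A, x ∈ binBlock n A a := by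
  simp only [mem_binSegLT, mem_binBlock, binLT]
  tauto

lemma disjoint_binBlock {a a' : ℕ} (ha : a ∈ A) (ha' : a' ∈ A) (h : a ≠ a') :
    Disjoint (binBlock n A a) (binBlock n A a') := by
  refine disjoint_left.2 fun x hx hx' => ?_
  obtain ⟨-, hax, hxA⟩ := mem_binBlock.1 hx
  obtain ⟨-, hax', hxA'⟩ := mem_binBlock.1 hx'
  rcases h.lt_or_gt with h | h
  · exact hax' ((hxA a' h).2 ha')
  · exact hax ((hxA' a h).2 ha)

lemma card_inter_Icc_of_mem_binBlock {a b : ℕ} {x : Finset ℕ} (hx : x ∈ binBlock n A a)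
    (hab : a ≤ b) : #(x ∩ Icc 1 b) = #(x ∩ Icc 1 (a - 1)) + #(A ∩ Ioc a b) := by
  obtain ⟨-, hax, hxA⟩ := mem_binBlock.1 hx
  rw [← card_inter_Icc_add_card_inter_Ioc x (show a - 1 ≤ b by omega)]
  congr 2
  ext j
  simp only [mem_inter, mem_Ioc]
  rcases lt_trichotomy a j with h | rfl | h
  · simp [hxA j h, h, show a - 1 < j by omega]
  · simp [hax]
  · simp [show ¬a - 1 < j by omega, show ¬a < j by omega]

lemma eq_of_mem_binBlock {a : ℕ} {x y : Finset ℕ} (hx : x ∈ binBlock n A a)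
    (hy : y ∈ binBlock n A a) (h : x ∩ Icc 1 (a - 1) = y ∩ Icc 1 (a - 1)) : x = y := by
  obtain ⟨hxn, hax, hxA⟩ := mem_binBlock.1 hx
  obtain ⟨hyn, hay, hyA⟩ := mem_binBlock.1 hy
  ext j
  rcases lt_trichotomy j a with hja | rfl | hja
  · have hj : ∀ z ⊆ Icc 1 n, j ∈ z ↔ j ∈ z ∩ Icc 1 (a - 1) := fun z hz => by
      simp only [mem_inter, mem_Icc, iff_self_and]
      exact fun hjz => ⟨(mem_Icc.1 (hz hjz)).1, by omega⟩
    rw [hj x hxn, hj y hyn, h]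
  · exact iff_of_false hax hay
  · rw [hxA j hja, hyA j hja]

lemma union_mem_binBlock (hA : A ⊆ Icc 1 n) {a : ℕ} (han : a ≤ n) {E : Finset ℕ}
    (hE : E ⊆ Icc 1 (a - 1)) :
    E ∪ A.filter (a < ·) ∈ binBlock n A a ∧ (E ∪ A.filter (a < ·)) ∩ Icc 1 (a - 1) = E := by
  have hEa : ∀ j ∈ E, j < a := fun j hj => by have := mem_Icc.1 (hE hj); omega
  refine ⟨mem_binBlock.2 ⟨union_subset (hE.trans (Icc_subset_Icc_right (by omega)))
    ((filter_subset _ _).trans hA), ?_, fun j hj => ?_⟩, ?_⟩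
  · simp only [mem_union, mem_filter, lt_irrefl, and_false, or_false]
    exact fun h => (hEa a h).false
  · simp only [mem_union, mem_filter, hj, and_true, or_iff_right_iff_imp]
    exact fun h => absurd (hEa j h) (by omega)
  · ext j
    simp only [mem_inter, mem_union, mem_filter]
    constructor
    · rintro ⟨h | ⟨-, hj⟩, hj'⟩
      · exact h
      · have := mem_Icc.1 hj'
        omega
    · exact fun h => ⟨Or.inl h, hE h⟩

end Blocks

section Ranks

variable {n : ℕ} {A : Finset ℕ} (hA : A ⊆ Icc 1 n)
include hA

lemma two_mul_blockRank_le {a : ℕ} (ha : a ∈ A) : 2 * blockRank n A a ≤ a - 1 := by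
  have han := (mem_Icc.1 (hA ha)).2
  suffices blockRank n A a ≤ (a - 1) / 2 by omega
  refine Finset.sup_le fun x hx => ?_
  have := (mem_filter.1 hx).2.two_mul_card_le (show a - 1 ≤ n by omega)
  omega

lemma blockRank_add_card_add_blockRank_le {a b : ℕ} (ha : a ∈ activeBlocks n A)
    (hb : b ∈ activeBlocks n A) (hab : a ≤ b) :
    blockRank n A a + #(A ∩ Ioc a b) + blockRank n A b ≤ b - 1 := by
  obtain ⟨-, hne⟩ := mem_filter.1 ha
  obtain ⟨x, hx, hxr⟩ := exists_mem_eq_sup _ hne fun x => #(x ∩ Icc 1 (a - 1))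
  obtain ⟨hxb, hsp⟩ := mem_filter.1 hx
  have hbA := (mem_filter.1 hb).1
  have h₁ := hsp.two_mul_card_le (mem_Icc.1 (hA hbA)).2
  rw [card_inter_Icc_of_mem_binBlock hxb hab, ← hxr] at h₁
  have h₂ := two_mul_blockRank_le hA hbA
  change 2 * (blockRank n A a + _) ≤ b at h₁
  omega

omit hA in
lemma levelRank_le {a b : ℕ} (hb : b ∈ activeBlocks n A) (hab : a ≤ b) :
    levelRank n A a ≤ b - 1 - blockRank n A b - #(A ∩ Ioc a b) :=
  Nat.sInf_le ⟨b, ⟨hb, hab⟩, rfl⟩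

omit hA in
lemma exists_levelRank_eq {a : ℕ} (ha : a ∈ activeBlocks n A) :
    ∃ b ∈ activeBlocks n A, a ≤ b ∧
      levelRank n A a = b - 1 - blockRank n A b - #(A ∩ Ioc a b) := by
  have hne : ((fun b => b - 1 - blockRank n A b - #(A ∩ Ioc a b)) ''
      {b | b ∈ activeBlocks n A ∧ a ≤ b}).Nonempty := ⟨_, a, ⟨ha, le_rfl⟩, rfl⟩
  obtain ⟨b, ⟨hb, hab⟩, h⟩ := Nat.sInf_mem hne
  exact ⟨b, hb, hab, h.symm⟩

omit hA in
lemma le_levelRank {a c : ℕ} (ha : a ∈ activeBlocks n A)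
    (h : ∀ b ∈ activeBlocks n A, a ≤ b → c ≤ b - 1 - blockRank n A b - #(A ∩ Ioc a b)) :
    c ≤ levelRank n A a :=
  le_csInf ⟨_, ⟨a, ⟨ha, le_rfl⟩, rfl⟩⟩ (by rintro _ ⟨b, ⟨hb, hab⟩, rfl⟩; exact h b hb hab)

lemma blockRank_le_levelRank {a : ℕ} (ha : a ∈ activeBlocks n A) :
    blockRank n A a ≤ levelRank n A a :=
  le_levelRank ha fun b hb hab => by
    have := blockRank_add_card_add_blockRank_le hA ha hb hab
    omega

lemma levelRank_add_blockRank_le {a : ℕ} (ha : a ∈ activeBlocks n A) :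
    levelRank n A a + blockRank n A a ≤ a - 1 := by
  have h₁ := levelRank_le ha le_rfl
  have h₂ := blockRank_add_card_add_blockRank_le hA ha ha le_rfl
  omega

lemma levelRank_add_card_le {a' a : ℕ} (ha' : a' ∈ activeBlocks n A) (ha : a ∈ activeBlocks n A)
    (h : a' < a) : levelRank n A a' + #(A ∩ Ioc a' a) ≤ levelRank n A a := by
  obtain ⟨b, hb, hab, hrank⟩ := exists_levelRank_eq ha
  have h₁ := levelRank_le (a := a') hb (h.le.trans hab)
  have h₂ := card_inter_Ioc_add_card_inter_Ioc A h.le hab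
  have h₃ := blockRank_add_card_add_blockRank_le hA ha' hb (h.le.trans hab)
  have h₄ := blockRank_add_card_add_blockRank_le hA ha hb hab
  omega

lemma card_inter_Icc_lt_levelRank (hsp : SpecialPoint n A) {a : ℕ}
    (ha : a ∈ activeBlocks n A) : #(A ∩ Icc 1 (a - 1)) < levelRank n A a := by
  have haA := (mem_filter.1 ha).1
  obtain ⟨c, rfl⟩ : ∃ c, a = c + 1 := ⟨a - 1, by grind⟩
  refine le_levelRank ha fun b hb hab => ?_
  have hbA := (mem_filter.1 hb).1
  have h₁ := hsp.two_mul_card_le (mem_Icc.1 (hA hbA)).2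
  rw [← card_inter_Icc_add_card_inter_Ioc A hab, card_inter_Icc_succ, if_pos haA] at h₁
  have h₂ := two_mul_blockRank_le hA hbA
  simp only [add_tsub_cancel_right]
  omega

end Ranks

section LevelAntichain

variable {n : ℕ} {A : Finset ℕ} (hA : A ⊆ Icc 1 n)
include hA

/-- `chainMin` maps the level of a block onto its special points, since the Greene–Kleitman
chain of each of them reaches the level. -/
lemma card_specialBlock_le_card_levelBlock {a : ℕ} (ha : a ∈ activeBlocks n A) :
    #(specialBlock n A a) ≤ #(levelBlock n A a) := by
  have han : a ≤ n := (mem_Icc.1 (hA (mem_filter.1 ha).1)).2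
  refine card_le_card_of_surjOn (fun x => chainMin (x ∩ Icc 1 (a - 1)) ∪ A.filter (a < ·))
    fun x hx => ?_
  obtain ⟨hxb, hsp⟩ := mem_filter.1 (mem_coe.1 hx)
  have hg : ∀ t ≤ a - 1, 0 ≤ walk (x ∩ Icc 1 (a - 1)) t := fun t ht => by
    rw [walk, inter_assoc, inter_eq_right.2 (Icc_subset_Icc_right ht)]
    exact specialPoint_iff_walk_nonneg.1 hsp t (by omega)
  have hgr : #(x ∩ Icc 1 (a - 1)) ≤ blockRank n A a :=
    le_sup (f := fun x => #(x ∩ Icc 1 (a - 1))) hx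
  obtain ⟨E, hE, hEcard, hEg⟩ := exists_card_eq_chainMin_eq inter_subset_right hg
    ((hgr.trans (blockRank_le_levelRank hA ha)))
    (by have := levelRank_add_blockRank_le hA ha; omega)
  obtain ⟨hEb, hEa⟩ := union_mem_binBlock hA han hE
  obtain ⟨hgb, hga⟩ := union_mem_binBlock hA han (inter_subset_right (s₁ := x))
  refine ⟨E ∪ A.filter (a < ·), mem_filter.2 ⟨hEb, by rw [hEa, hEcard]⟩, ?_⟩
  simp only [hEa, hEg]
  exact eq_of_mem_binBlock hgb hxb hga

lemma eq_of_subset_of_mem_levelBlock {a a' : ℕ} {x y : Finset ℕ} (ha : a ∈ activeBlocks n A)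
    (ha' : a' ∈ activeBlocks n A) (hx : x ∈ levelBlock n A a) (hy : y ∈ levelBlock n A a')
    (hxy : x ⊆ y) : x = y := by
  obtain ⟨hxb, hxr⟩ := mem_filter.1 hx
  obtain ⟨hyb, hyr⟩ := mem_filter.1 hy
  obtain ⟨-, hax, hxA⟩ := mem_binBlock.1 hxb
  obtain ⟨-, hay, hyA⟩ := mem_binBlock.1 hyb
  rcases lt_trichotomy a a' with h | rfl | h
  · exact absurd (hxy ((hxA a' h).2 (mem_filter.1 ha').1)) hay
  · refine eq_of_mem_binBlock hxb hyb (eq_of_subset_of_card_le (inter_subset_inter_right hxy) ?_)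
    rw [hxr, hyr]
  · have hlt : #(x ∩ Icc 1 a) < #(y ∩ Icc 1 a) := by
      refine card_lt_card ((ssubset_iff_of_subset (inter_subset_inter_right hxy)).2
        ⟨a, mem_inter.2 ⟨(hyA a h).2 (mem_filter.1 ha).1, ?_⟩, fun h' => hax (mem_inter.1 h').1⟩)
      exact mem_Icc.2 ⟨(mem_Icc.1 (hA (mem_filter.1 ha).1)).1, le_rfl⟩
    rw [card_inter_Icc_of_mem_binBlock hxb le_rfl, card_inter_Icc_of_mem_binBlock hyb h.le, hxr,
      hyr, Ioc_self, inter_empty, card_empty, add_zero] at hlt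
    exact absurd (levelRank_add_card_le hA ha' ha h) (not_le.2 hlt)

omit hA in
lemma levelAntichain_subset_binSegLT : levelAntichain n A ⊆ binSegLT n A := fun x hx => by
  obtain ⟨a, ha, hx⟩ := mem_biUnion.1 hx
  exact mem_binSegLT_iff_exists_binBlock.2 ⟨a, (mem_filter.1 ha).1, (mem_filter.1 hx).1⟩

lemma isAntichain_levelAntichain : IsAntichain (· ⊆ ·) (levelAntichain n A : Set (Finset ℕ)) := by
  intro x hx y hy hne hxy
  obtain ⟨a, ha, hx⟩ := mem_biUnion.1 hx
  obtain ⟨a', ha', hy⟩ := mem_biUnion.1 hy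
  exact hne (eq_of_subset_of_mem_levelBlock hA ha ha' hx hy hxy)

lemma incomparable_of_mem_levelAntichain (hsp : SpecialPoint n A) {x : Finset ℕ}
    (hx : x ∈ levelAntichain n A) : ¬x ⊆ A ∧ ¬A ⊆ x := by
  obtain ⟨a, ha, hx⟩ := mem_biUnion.1 hx
  obtain ⟨hxb, hxr⟩ := mem_filter.1 hx
  obtain ⟨-, hax, -⟩ := mem_binBlock.1 hxb
  refine ⟨fun hxA => ?_, fun hAx => hax (hAx (mem_filter.1 ha).1)⟩
  have := card_le_card (inter_subset_inter_right hxA (u := Icc 1 (a - 1)))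
  have := card_inter_Icc_lt_levelRank hA hsp ha
  omega

lemma card_filter_specialPoint_le_card_levelAntichain :
    #((binSegLT n A).filter (SpecialPoint n)) ≤ #(levelAntichain n A) := by
  have hsub : (binSegLT n A).filter (SpecialPoint n) ⊆
      (activeBlocks n A).biUnion (specialBlock n A) := fun x hx => by
    obtain ⟨hx, hsp⟩ := mem_filter.1 hx
    obtain ⟨a, ha, hxa⟩ := mem_binSegLT_iff_exists_binBlock.1 hx
    have hxs : x ∈ specialBlock n A a := mem_filter.2 ⟨hxa, hsp⟩
    exact mem_biUnion.2 ⟨a, mem_filter.2 ⟨ha, x, hxs⟩, hxs⟩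
  have hdisj : (activeBlocks n A : Set ℕ).PairwiseDisjoint (levelBlock n A) :=
    fun a ha a' ha' h => (disjoint_binBlock (mem_filter.1 ha).1 (mem_filter.1 ha').1 h).mono
      (filter_subset _ _) (filter_subset _ _)
  calc #((binSegLT n A).filter (SpecialPoint n))
      _ ≤ ∑ a ∈ activeBlocks n A, #(specialBlock n A a) := (card_le_card hsub).trans card_biUnion_le
      _ ≤ ∑ a ∈ activeBlocks n A, #(levelBlock n A a) :=
        sum_le_sum fun a ha => card_specialBlock_le_card_levelBlock hA ha
      _ = #(levelAntichain n A) := (card_biUnion hdisj).symm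

end LevelAntichain

section Width

variable {n : ℕ} {A : Finset ℕ} (hA : A ⊆ Icc 1 n)
include hA

theorem width_binSegLT : width (binSegLT n A) = #((binSegLT n A).filter (SpecialPoint n)) :=
  le_antisymm
    (width_le_card_filter_specialPoint (fun _ hB => (mem_binSegLT.1 hB).1)
      fun _ hB _ hCB => mem_binSegLT_of_subset hB hCB)
    ((card_filter_specialPoint_le_card_levelAntichain hA).trans
      (card_le_width levelAntichain_subset_binSegLT (isAntichain_levelAntichain hA)))

lemma width_union_singleton_le :
    width (binSegLT n A ∪ {A}) ≤ width (binSegLT n A) + if SpecialPoint n A then 1 else 0 := by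
  have hF : ∀ B ∈ binSegLT n A ∪ {A}, B ⊆ Icc 1 n := fun B hB => by
    rcases mem_union.1 hB with hB | hB
    · exact (mem_binSegLT.1 hB).1
    · exact mem_singleton.1 hB ▸ hA
  have hdown : ∀ B ∈ binSegLT n A ∪ {A}, ∀ C ⊆ B, C ∈ binSegLT n A ∪ {A} := fun B hB C hCB => by
    rcases mem_union.1 hB with hB | hB
    · exact mem_union_left _ (mem_binSegLT_of_subset hB hCB)
    · rcases hCB.eq_or_ssubset with rfl | hlt
      · exact mem_union_right _ hB
      · rw [mem_singleton.1 hB] at hlt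
        exact mem_union_left _ (mem_binSegLT.2 ⟨hlt.subset.trans hA, binLT_of_ssubset hlt⟩)
  refine (width_le_card_filter_specialPoint hF hdown).trans ?_
  rw [filter_union, filter_singleton, width_binSegLT hA]
  refine (card_union_le _ _).trans (add_le_add_right ?_ _)
  split_ifs <;> simp

lemma width_binSegLT_add_one_le (hsp : SpecialPoint n A) :
    width (binSegLT n A) + 1 ≤ width (binSegLT n A ∪ {A}) := by
  have hAW : A ∉ levelAntichain n A := fun h =>
    binLT_irrefl A (mem_binSegLT.1 (levelAntichain_subset_binSegLT h)).2
  have hanti : IsAntichain (· ⊆ ·) (insert A (levelAntichain n A) : Set (Finset ℕ)) :=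
    (isAntichain_levelAntichain hA).insert
      (fun _ hx _ => (incomparable_of_mem_levelAntichain hA hsp hx).1)
      (fun _ hx _ => (incomparable_of_mem_levelAntichain hA hsp hx).2)
  calc width (binSegLT n A) + 1
      _ ≤ #(levelAntichain n A) + 1 := by
        rw [width_binSegLT hA]
        exact add_le_add_left (card_filter_specialPoint_le_card_levelAntichain hA) 1
      _ = #(insert A (levelAntichain n A)) := (card_insert_of_notMem hAW).symm
      _ ≤ width (binSegLT n A ∪ {A}) := by
        refine card_le_width (insert_subset (mem_union_right _ (mem_singleton_self A))
          (levelAntichain_subset_binSegLT.trans subset_union_left)) ?_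
        rwa [coe_insert]

end Width

/-- Adding `A` to the binary initial segment `[∅, A)` increases the width
exactly when `A` is a special point. -/
theorem width_increase_iff_special (n : ℕ) (A : Finset ℕ) (hA : A ⊆ Finset.Icc 1 n) :
    width (binSegLT n A ∪ {A}) = width (binSegLT n A) + 1 ↔ SpecialPoint n A := by
  have hle := width_union_singleton_le hA
  refine ⟨fun h => ?_, fun hsp => le_antisymm ?_ (width_binSegLT_add_one_le hA hsp)⟩
  · by_contra hsp
    rw [if_neg hsp] at hle
    omega
  · rwa [if_pos hsp] at hle
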